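/- Set f1 := x, f2 := y+w²−t, f3 := z. For each i ∈ {1,2,3}, if αi = 0 then fi is an invariant divisor of the C3^(1) system: the total derivative of fi along the Hamiltonian vector field, namely ∂fi/∂t + (∂H/∂y)(∂fi/∂x) − (∂H/∂x)(∂fi/∂y) + (∂H/∂w)(∂fi/∂z) − (∂H/∂z)(∂fi/∂w), is divisible by fi in the polynomial ring ℂ(t)[x,y,z,w]. -/

import Mathlib

/- STATEMENT 7: invariant divisors of the C3^(1) system.  For each i ∈ {1,2,3},
if αi = 0 then the total derivative of fi along the Hamiltonian vector field is
divisible by fi.  Divisibility in ℂ(t)[x,y,z,w] is formalized as the existence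
of a cofactor g with D fi = fi * g pointwise for all t ≠ 0 and all x,y,z,w. -/

open Complex

noncomputable def HC3 (a0 a1 a2 a3 : ℂ) (t x y z w : ℂ) : ℂ :=
  (x^2*y^3 - (t*x + 2*a1 + a2 + a3)*x*y^2 - ((a0*t - 1)*x - a1*(a1+a2+a3))*y - t*x
    - z^2*w^4/4 + (a3/2)*z*w^3 + (1/4)*(2*t*z^2 - a3^2)*w^2
    - (1/2)*((a3+1)*t - 1)*z*w - t^2*z^2/4
    + (x*y - a1)*y*z*w) / t^2

noncomputable def pdX (H : ℂ → ℂ → ℂ → ℂ → ℂ → ℂ) (t x y z w : ℂ) : ℂ :=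
  deriv (fun s => H t s y z w) x

noncomputable def pdY (H : ℂ → ℂ → ℂ → ℂ → ℂ → ℂ) (t x y z w : ℂ) : ℂ :=
  deriv (fun s => H t x s z w) y

noncomputable def pdZ (H : ℂ → ℂ → ℂ → ℂ → ℂ → ℂ) (t x y z w : ℂ) : ℂ :=
  deriv (fun s => H t x y s w) z

noncomputable def pdW (H : ℂ → ℂ → ℂ → ℂ → ℂ → ℂ) (t x y z w : ℂ) : ℂ :=
  deriv (fun s => H t x y z s) w

noncomputable def pdT (f : ℂ → ℂ → ℂ → ℂ → ℂ → ℂ) (t x y z w : ℂ) : ℂ :=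
  deriv (fun s => f s x y z w) t

/-- Total derivative of `f` along the Hamiltonian vector field of `H`:
`∂f/∂t + (∂H/∂y)(∂f/∂x) − (∂H/∂x)(∂f/∂y) + (∂H/∂w)(∂f/∂z) − (∂H/∂z)(∂f/∂w)`. -/
noncomputable def totalDeriv (H f : ℂ → ℂ → ℂ → ℂ → ℂ → ℂ) (t x y z w : ℂ) : ℂ :=
  pdT f t x y z w
  + pdY H t x y z w * pdX f t x y z w
  - pdX H t x y z w * pdY f t x y z w
  + pdW H t x y z w * pdZ f t x y z w
  - pdZ H t x y z w * pdW f t x y z w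

/-! Each fᵢ involves at most two coordinates besides t, so its total derivative is an explicit
combination of partial derivatives of H, and H is a polynomial of degree at most four in each
coordinate, so those partials are read off coefficientwise. For f₁ = x and f₃ = z the terms of
∂H/∂y resp. ∂H/∂w that do not carry the factor x resp. z are multiples of α₁ resp. α₃. For
f₂ = y + w² − t, reducing modulo y ≡ t − w² leaves (α₀ + 2α₁ + α₃ − 1) t (t − w²) when α₂ = 0,
which vanishes by the parameter relation. -/

theorem deriv_quartic {𝕜 : Type*} [NontriviallyNormedField 𝕜] (c₀ c₁ c₂ c₃ c₄ y : 𝕜) :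
    deriv (fun s => c₀ + c₁ * s + c₂ * s ^ 2 + c₃ * s ^ 3 + c₄ * s ^ 4) y
      = c₁ + 2 * c₂ * y + 3 * c₃ * y ^ 2 + 4 * c₄ * y ^ 3 := by
  refine (((((hasDerivAt_const y c₀).add ((hasDerivAt_id' y).const_mul c₁)).add
    ((hasDerivAt_pow 2 y).const_mul c₂)).add ((hasDerivAt_pow 3 y).const_mul c₃)).add
    ((hasDerivAt_pow 4 y).const_mul c₄)).deriv.trans ?_
  push_cast
  ring

theorem deriv_eq_of_eq_quartic {𝕜 : Type*} [NontriviallyNormedField 𝕜] {f : 𝕜 → 𝕜}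
    (c₀ c₁ c₂ c₃ c₄ : 𝕜) (hf : ∀ s, f s = c₀ + c₁ * s + c₂ * s ^ 2 + c₃ * s ^ 3 + c₄ * s ^ 4)
    (y : 𝕜) : deriv f y = c₁ + 2 * c₂ * y + 3 * c₃ * y ^ 2 + 4 * c₄ * y ^ 3 := by
  rw [funext hf, deriv_quartic]

section Coordinates

variable (H : ℂ → ℂ → ℂ → ℂ → ℂ → ℂ) (t x y z w : ℂ)

theorem totalDeriv_x : totalDeriv H (fun _ x _ _ _ => x) t x y z w = pdY H t x y z w := by
  simp [totalDeriv, pdT, pdX, pdY, pdZ, pdW]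

theorem totalDeriv_z : totalDeriv H (fun _ _ _ z _ => z) t x y z w = pdW H t x y z w := by
  simp [totalDeriv, pdT, pdX, pdY, pdZ, pdW]

theorem totalDeriv_y_add_sq_sub : totalDeriv H (fun t _ y _ w => y + w ^ 2 - t) t x y z w
    = -1 - pdX H t x y z w - 2 * w * pdZ H t x y z w := by
  simp [totalDeriv, pdT, pdX, pdY, pdZ, pdW, mul_comm]

end Coordinates

section HC3

variable (a0 a1 a2 a3 t x y z w : ℂ)

theorem pdX_HC3 : pdX (HC3 a0 a1 a2 a3) t x y z w
    = (2 * x * y ^ 3 - (2 * t * x + 2 * a1 + a2 + a3) * y ^ 2 - (a0 * t - 1) * y - t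
        + y ^ 2 * z * w) / t ^ 2 := by
  rw [pdX, deriv_eq_of_eq_quartic (HC3 a0 a1 a2 a3 t 0 y z w)
    ((-(2 * a1 + a2 + a3) * y ^ 2 - (a0 * t - 1) * y - t + y ^ 2 * z * w) / t ^ 2)
    ((y ^ 3 - t * y ^ 2) / t ^ 2) 0 0 (fun s => by simp only [HC3]; ring)]
  ring

theorem pdY_HC3 : pdY (HC3 a0 a1 a2 a3) t x y z w
    = (3 * x ^ 2 * y ^ 2 - 2 * (t * x + 2 * a1 + a2 + a3) * x * y + 2 * x * y * z * w
        - (a0 * t - 1) * x + a1 * (a1 + a2 + a3) - a1 * z * w) / t ^ 2 := by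
  rw [pdY, deriv_eq_of_eq_quartic (HC3 a0 a1 a2 a3 t x 0 z w)
    ((-((a0 * t - 1) * x - a1 * (a1 + a2 + a3)) - a1 * z * w) / t ^ 2)
    ((-(t * x + 2 * a1 + a2 + a3) * x + x * z * w) / t ^ 2) (x ^ 2 / t ^ 2) 0
    (fun s => by simp only [HC3]; ring)]
  ring

theorem pdZ_HC3 : pdZ (HC3 a0 a1 a2 a3) t x y z w
    = (a3 / 2 * w ^ 3 - ((a3 + 1) * t - 1) * w / 2 + (x * y - a1) * y * w
        - z * (w ^ 2 - t) ^ 2 / 2) / t ^ 2 := by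
  rw [pdZ, deriv_eq_of_eq_quartic (HC3 a0 a1 a2 a3 t x y 0 w)
    ((a3 / 2 * w ^ 3 - ((a3 + 1) * t - 1) * w / 2 + (x * y - a1) * y * w) / t ^ 2)
    (-(w ^ 2 - t) ^ 2 / 4 / t ^ 2) 0 0 (fun s => by simp only [HC3]; ring)]
  ring

theorem pdW_HC3 : pdW (HC3 a0 a1 a2 a3) t x y z w
    = (-((a3 + 1) * t - 1) * z / 2 + (x * y - a1) * y * z + (2 * t * z ^ 2 - a3 ^ 2) * w / 2
        + 3 * a3 * z * w ^ 2 / 2 - z ^ 2 * w ^ 3) / t ^ 2 := by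
  rw [pdW, deriv_eq_of_eq_quartic (HC3 a0 a1 a2 a3 t x y z 0)
    ((-((a3 + 1) * t - 1) * z / 2 + (x * y - a1) * y * z) / t ^ 2)
    ((2 * t * z ^ 2 - a3 ^ 2) / 4 / t ^ 2) (a3 * z / 2 / t ^ 2) (-z ^ 2 / 4 / t ^ 2)
    (fun s => by simp only [HC3]; ring)]
  ring

end HC3

def IsInvariantDivisor (H f : ℂ → ℂ → ℂ → ℂ → ℂ → ℂ) : Prop :=
  ∃ g : ℂ → ℂ → ℂ → ℂ → ℂ → ℂ, ∀ t x y z w : ℂ, t ≠ 0 →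
    totalDeriv H f t x y z w = f t x y z w * g t x y z w

section InvariantDivisors

variable {a0 a1 a2 a3 : ℂ}

theorem isInvariantDivisor_x_HC3 (ha1 : a1 = 0) :
    IsInvariantDivisor (HC3 a0 a1 a2 a3) (fun _ x _ _ _ => x) := by
  subst ha1
  refine ⟨fun t x y z w =>
    (3 * x * y ^ 2 - 2 * (t * x + a2 + a3) * y + 2 * y * z * w - (a0 * t - 1)) / t ^ 2, ?_⟩
  intro t x y z w _
  rw [totalDeriv_x, pdY_HC3]
  ring

theorem isInvariantDivisor_z_HC3 (ha3 : a3 = 0) :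
    IsInvariantDivisor (HC3 a0 a1 a2 a3) (fun _ _ _ z _ => z) := by
  subst ha3
  refine ⟨fun t x y z w =>
    (-(t - 1) / 2 + (x * y - a1) * y + t * z * w - z * w ^ 3) / t ^ 2, ?_⟩
  intro t x y z w _
  rw [totalDeriv_z, pdW_HC3]
  ring

theorem isInvariantDivisor_y_add_sq_sub_HC3 (hrel : a0 + 2 * a1 + 2 * a2 + a3 = 1)
    (ha2 : a2 = 0) :
    IsInvariantDivisor (HC3 a0 a1 a2 a3) (fun t _ y _ w => y + w ^ 2 - t) := by
  subst ha2
  refine ⟨fun t x y z w => ((2 * a1 + a3 - z * w) * (y + t - w ^ 2) - 2 * x * y ^ 2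
    + 2 * a1 * w ^ 2 + a0 * t - 1) / t ^ 2, ?_⟩
  intro t x y z w ht
  rw [totalDeriv_y_add_sq_sub, pdX_HC3, pdZ_HC3]
  field_simp
  linear_combination t * (t - w ^ 2) * hrel

end InvariantDivisors

theorem invariant_divisors_C3 (a0 a1 a2 a3 : ℂ)
    (hrel : a0 + 2*a1 + 2*a2 + a3 = 1) :
    -- f1 = x
    (a1 = 0 → ∃ g : ℂ → ℂ → ℂ → ℂ → ℂ → ℂ, ∀ t x y z w : ℂ, t ≠ 0 →
      totalDeriv (HC3 a0 a1 a2 a3) (fun _ x _ _ _ => x) t x y z w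
        = x * g t x y z w) ∧
    -- f2 = y + w² - t
    (a2 = 0 → ∃ g : ℂ → ℂ → ℂ → ℂ → ℂ → ℂ, ∀ t x y z w : ℂ, t ≠ 0 →
      totalDeriv (HC3 a0 a1 a2 a3) (fun t _ y _ w => y + w^2 - t) t x y z w
        = (y + w^2 - t) * g t x y z w) ∧
    -- f3 = z
    (a3 = 0 → ∃ g : ℂ → ℂ → ℂ → ℂ → ℂ → ℂ, ∀ t x y z w : ℂ, t ≠ 0 →
      totalDeriv (HC3 a0 a1 a2 a3) (fun _ _ _ z _ => z) t x y z w
        = z * g t x y z w) :=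
  ⟨isInvariantDivisor_x_HC3, isInvariantDivisor_y_add_sq_sub_HC3 hrel,
    isInvariantDivisor_z_HC3⟩
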